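/- Let k be an algebraically closed field of characteristic zero, let a, b, m, t be positive integers with gcd(a,b) = 1, let α ∈ k be nonzero, and set u = (x^a y^b)^m and v = (x^a y^b)^t(α + z) in k⟦x,y,z⟧. Let w ∈ k⟦x,y,z⟧ be such that the formal Jacobian determinant of (u, v, w) with respect to (x, y, z) equals x^r y^s·δ for some natural numbers r, s and some unit δ. Then there exists a regular system of parameters x̄, ȳ, z̄ of k⟦x,y,z⟧ with u = (x̄^a ȳ^b)^m and v = (x̄^a ȳ^b)^t(α + z̄), natural numbers c, d with ad − bc ≠ 0, and a two-variable power series g, such that w = g(x̄^a ȳ^b, z̄) + x̄^c ȳ^d. -/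

import Mathlib

open MvPowerSeries

/-- The formal partial derivative of a multivariate power series with respect to the
variable `s`, defined by termwise differentiation. -/
noncomputable def mvPderiv {σ : Type*} [DecidableEq σ] {R : Type*} [CommRing R]
    (s : σ) (f : MvPowerSeries σ R) : MvPowerSeries σ R :=
  fun m => (m s + 1 : ℕ) • MvPowerSeries.coeff (R := R) (m + Finsupp.single s 1) f

/-- The formal Jacobian determinant of a triple of power series in three variables:
the determinant of the `3×3` matrix of formal partial derivatives. -/
noncomputable def mvJacobian {R : Type*} [CommRing R]
    (u v w : MvPowerSeries (Fin 3) R) : MvPowerSeries (Fin 3) R :=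
  Matrix.det (Matrix.of fun i j => mvPderiv j (![u, v, w] i))

/-- Substitution of two power series `A, B` (of positive order) for the variables of a
two-variable power series `g`; the coefficient of `g(A,B)` at `m` is the (finitely
supported) sum of the contributions of the terms `g_{p₁,p₂} A^{p₁} B^{p₂}`. -/
noncomputable def subst2 {R : Type*} [CommRing R] (g : MvPowerSeries (Fin 2) R)
    (A B : MvPowerSeries (Fin 3) R) : MvPowerSeries (Fin 3) R :=
  fun m => ∑ᶠ p : ℕ × ℕ,
    MvPowerSeries.coeff (R := R) (Finsupp.single 0 p.1 + Finsupp.single 1 p.2) g *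
      MvPowerSeries.coeff (R := R) m (A ^ p.1 * B ^ p.2)

/-- A triple of elements of `k⟦x,y,z⟧` is a regular system of parameters if all three have
zero constant term (i.e. lie in the maximal ideal `m`) and their residues form a basis of
`m/m²`, equivalently the matrix of their linear coefficients is invertible. -/
def IsRegularSystem {k : Type*} [Field k] (a b c : MvPowerSeries (Fin 3) k) : Prop :=
  MvPowerSeries.constantCoeff (σ := Fin 3) (R := k) a = 0 ∧
  MvPowerSeries.constantCoeff (σ := Fin 3) (R := k) b = 0 ∧
  MvPowerSeries.constantCoeff (σ := Fin 3) (R := k) c = 0 ∧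
  Matrix.det (Matrix.of fun i j =>
    MvPowerSeries.coeff (R := k) (Finsupp.single j 1) (![a, b, c] i)) ≠ 0


section Helpers
variable {k : Type*} [Field k]


noncomputable def E3 (i j l : ℕ) : Fin 3 →₀ ℕ :=
  Finsupp.single 0 i + Finsupp.single 1 j + Finsupp.single 2 l

@[simp] lemma E3_apply0 (i j l : ℕ) : E3 i j l 0 = i := by
  simp [E3, Finsupp.add_apply]
@[simp] lemma E3_apply1 (i j l : ℕ) : E3 i j l 1 = j := by
  simp [E3, Finsupp.add_apply, Finsupp.single_apply]
@[simp] lemma E3_apply2 (i j l : ℕ) : E3 i j l 2 = l := by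
  simp [E3, Finsupp.add_apply, Finsupp.single_apply]

lemma XXX_eq_monomial (i j l : ℕ) :
    (MvPowerSeries.X 0 ^ i * MvPowerSeries.X 1 ^ j * MvPowerSeries.X 2 ^ l :
      MvPowerSeries (Fin 3) k) = MvPowerSeries.monomial (R := k) (E3 i j l) 1 := by
  rw [MvPowerSeries.X_pow_eq, MvPowerSeries.X_pow_eq, MvPowerSeries.X_pow_eq,
    MvPowerSeries.monomial_mul_monomial, MvPowerSeries.monomial_mul_monomial]
  simp [E3]

lemma mono_eq (i j l : ℕ) (c : k) :
    MvPowerSeries.monomial (R := k) (E3 i j l) c =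
      MvPowerSeries.C (σ := Fin 3) (R := k) c *
        (MvPowerSeries.X 0 ^ i * MvPowerSeries.X 1 ^ j * MvPowerSeries.X 2 ^ l) := by
  rw [XXX_eq_monomial]
  have : (MvPowerSeries.C (σ := Fin 3) (R := k) c) = MvPowerSeries.monomial (R := k) 0 c := rfl
  rw [this, MvPowerSeries.monomial_mul_monomial, zero_add, mul_one]

lemma mvPderiv_apply (s : Fin 3) (f : MvPowerSeries (Fin 3) k) (n : Fin 3 →₀ ℕ) :
    MvPowerSeries.coeff (R := k) n (mvPderiv s f) =
      ((n s + 1 : ℕ) : k) * MvPowerSeries.coeff (R := k) (n + Finsupp.single s 1) f := by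
  rw [MvPowerSeries.coeff_apply, mvPderiv, nsmul_eq_mul]

lemma mvPderiv_add (s : Fin 3) (f g : MvPowerSeries (Fin 3) k) :
    mvPderiv s (f + g) = mvPderiv s f + mvPderiv s g := by
  ext n
  rw [map_add, mvPderiv_apply, mvPderiv_apply, mvPderiv_apply, map_add]
  ring

lemma mvPderiv_C_mul (s : Fin 3) (c : k) (f : MvPowerSeries (Fin 3) k) :
    mvPderiv s (MvPowerSeries.C (σ := Fin 3) (R := k) c * f) =
      MvPowerSeries.C (σ := Fin 3) (R := k) c * mvPderiv s f := by
  ext n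
  rw [MvPowerSeries.coeff_C_mul, mvPderiv_apply, mvPderiv_apply,
    MvPowerSeries.coeff_C_mul]
  ring

lemma mvPderiv_monomial (s : Fin 3) (d : Fin 3 →₀ ℕ) (c : k) :
    mvPderiv s (MvPowerSeries.monomial (R := k) d c) =
      MvPowerSeries.monomial (R := k) (d - Finsupp.single s 1) ((d s : k) * c) := by
  ext n
  rw [mvPderiv_apply, MvPowerSeries.coeff_monomial, MvPowerSeries.coeff_monomial]
  by_cases hds : d s = 0
  · have h1 : n + Finsupp.single s 1 ≠ d := by
      intro h
      have := congrArg (fun m : Fin 3 →₀ ℕ => m s) h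
      simp [Finsupp.add_apply] at this
      omega
    rw [if_neg h1]
    split_ifs with h2
    · simp [hds]
    · ring
  · have key : n + Finsupp.single s 1 = d ↔ n = d - Finsupp.single s 1 := by
      constructor
      · intro h; rw [← h]; simp
      · intro h
        rw [h, tsub_add_cancel_of_le]
        rw [Finsupp.single_le_iff]
        omega
    by_cases h2 : n + Finsupp.single s 1 = d
    · rw [if_pos h2, if_pos (key.mp h2)]
      have : n s + 1 = d s := by
        have := congrArg (fun m : Fin 3 →₀ ℕ => m s) h2
        simpa [Finsupp.add_apply] using this
      rw [← this]
    · rw [if_neg h2, if_neg (fun h => h2 (key.mpr h))]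
      ring

lemma E3_sub0 (i j l : ℕ) : E3 i j l - Finsupp.single 0 1 = E3 (i-1) j l := by
  ext s
  fin_cases s <;> simp [Finsupp.tsub_apply, Finsupp.single_apply]

lemma E3_sub1 (i j l : ℕ) : E3 i j l - Finsupp.single 1 1 = E3 i (j-1) l := by
  ext s
  fin_cases s <;> simp [Finsupp.tsub_apply, Finsupp.single_apply]

lemma E3_sub2 (i j l : ℕ) : E3 i j l - Finsupp.single 2 1 = E3 i j (l-1) := by
  ext s
  fin_cases s <;> simp [Finsupp.tsub_apply, Finsupp.single_apply]

lemma mvPderiv0_E3 (i j l : ℕ) (c : k) :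
    mvPderiv 0 (MvPowerSeries.monomial (R := k) (E3 i j l) c) =
      MvPowerSeries.monomial (R := k) (E3 (i-1) j l) ((i : k) * c) := by
  rw [mvPderiv_monomial, E3_sub0, E3_apply0]

lemma mvPderiv1_E3 (i j l : ℕ) (c : k) :
    mvPderiv 1 (MvPowerSeries.monomial (R := k) (E3 i j l) c) =
      MvPowerSeries.monomial (R := k) (E3 i (j-1) l) ((j : k) * c) := by
  rw [mvPderiv_monomial, E3_sub1, E3_apply1]

lemma mvPderiv2_E3 (i j l : ℕ) (c : k) :
    mvPderiv 2 (MvPowerSeries.monomial (R := k) (E3 i j l) c) =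
      MvPowerSeries.monomial (R := k) (E3 i j (l-1)) ((l : k) * c) := by
  rw [mvPderiv_monomial, E3_sub2, E3_apply2]

lemma jacobian_formula (a b m t A B : ℕ) (ha : 0 < a) (hb : 0 < b) (hm : 0 < m) (ht : 0 < t)
    (hA : a*m + a*t = A + 1) (hB : b*m + b*t = B + 1) (α : k) (w : MvPowerSeries (Fin 3) k) :
    mvJacobian (((MvPowerSeries.X 0) ^ a * (MvPowerSeries.X 1) ^ b) ^ m)
      (((MvPowerSeries.X 0) ^ a * (MvPowerSeries.X 1) ^ b) ^ t *
        (MvPowerSeries.C (σ := Fin 3) (R := k) α + MvPowerSeries.X 2)) w =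
    MvPowerSeries.C (σ := Fin 3) (R := k) ((m : k) : k) * MvPowerSeries.monomial (R := k) (E3 A B 0) 1 *
      (MvPowerSeries.C (σ := Fin 3) (R := k) (b : k) * (MvPowerSeries.X 0 * mvPderiv 0 w) -
       MvPowerSeries.C (σ := Fin 3) (R := k) (a : k) * (MvPowerSeries.X 1 * mvPderiv 1 w)) := by
  obtain ⟨p, hp⟩ : ∃ p, a*m = p+1 := ⟨a*m - 1, (Nat.succ_pred_eq_of_pos (Nat.mul_pos ha hm)).symm⟩
  obtain ⟨q, hq⟩ : ∃ q, b*m = q+1 := ⟨b*m - 1, (Nat.succ_pred_eq_of_pos (Nat.mul_pos hb hm)).symm⟩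
  obtain ⟨P, hP⟩ : ∃ P, a*t = P+1 := ⟨a*t - 1, (Nat.succ_pred_eq_of_pos (Nat.mul_pos ha ht)).symm⟩
  obtain ⟨Q, hQ⟩ : ∃ Q, b*t = Q+1 := ⟨b*t - 1, (Nat.succ_pred_eq_of_pos (Nat.mul_pos hb ht)).symm⟩
  rw [hp, hP] at hA
  rw [hq, hQ] at hB
  have hu : (((MvPowerSeries.X 0) ^ a * (MvPowerSeries.X 1) ^ b) ^ m :
      MvPowerSeries (Fin 3) k) = MvPowerSeries.monomial (R := k) (E3 (a*m) (b*m) 0) 1 := by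
    rw [← XXX_eq_monomial, pow_zero, mul_one, mul_pow, ← pow_mul, ← pow_mul]
  have hv : (((MvPowerSeries.X 0) ^ a * (MvPowerSeries.X 1) ^ b) ^ t *
        (MvPowerSeries.C (σ := Fin 3) (R := k) α + MvPowerSeries.X 2) : MvPowerSeries (Fin 3) k) =
      MvPowerSeries.C (σ := Fin 3) (R := k) α * MvPowerSeries.monomial (R := k) (E3 (a*t) (b*t) 0) 1 +
        MvPowerSeries.monomial (R := k) (E3 (a*t) (b*t) 1) 1 := by
    rw [← XXX_eq_monomial, ← XXX_eq_monomial, pow_zero, mul_one, pow_one, mul_pow,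
      ← pow_mul, ← pow_mul]
    ring
  rw [mvJacobian, Matrix.det_fin_three]
  simp only [Matrix.of_apply, Matrix.cons_val', Matrix.cons_val_zero, Matrix.cons_val_one,
    Matrix.head_cons, Matrix.empty_val', Matrix.cons_val_fin_one, Matrix.cons_val_two,
    Matrix.tail_cons, Matrix.head_fin_const]
  rw [hu, hv]
  rw [mvPderiv_add, mvPderiv_add, mvPderiv_add, mvPderiv_C_mul, mvPderiv_C_mul, mvPderiv_C_mul]
  rw [mvPderiv0_E3, mvPderiv1_E3, mvPderiv2_E3, mvPderiv0_E3, mvPderiv1_E3, mvPderiv2_E3,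
    mvPderiv0_E3, mvPderiv1_E3, mvPderiv2_E3]
  -- rewrite subtracted exponents
  rw [show a*m - 1 = p by rw [hp]; omega, show b*m - 1 = q by rw [hq]; omega, show a*t - 1 = P by rw [hP]; omega,
    show b*t - 1 = Q by rw [hQ]; omega]
  -- convert monomials to X-products
  simp only [mono_eq, map_mul, map_natCast]
  push_cast
  -- rewrite remaining raw exponents
  rw [show a*m = p+1 from hp, show b*m = q+1 from hq, show a*t = P+1 from hP,
    show b*t = Q+1 from hQ, show A = p + P + 1 by omega, show B = q + Q + 1 by omega]
  push_cast
  simp only [map_one]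
  ring
lemma E3_le_iff {i j l : ℕ} {n : Fin 3 →₀ ℕ} :
    E3 i j l ≤ n ↔ i ≤ n 0 ∧ j ≤ n 1 ∧ l ≤ n 2 := by
  constructor
  · intro h
    refine ⟨?_, ?_, ?_⟩
    · have := h 0; simpa using this
    · have := h 1; simpa using this
    · have := h 2; simpa using this
  · rintro ⟨h0, h1, h2⟩ i
    fin_cases i <;> simpa

lemma coeff_X_mul_pderiv (s : Fin 3) (f : MvPowerSeries (Fin 3) k) (n : Fin 3 →₀ ℕ) :
    MvPowerSeries.coeff (R := k) n (MvPowerSeries.X s * mvPderiv s f) =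
      (n s : k) * MvPowerSeries.coeff (R := k) n f := by
  rw [MvPowerSeries.X, MvPowerSeries.coeff_monomial_mul]
  by_cases h : n s = 0
  · rw [if_neg, h]
    · push_cast; ring
    · rw [Finsupp.single_le_iff]; omega
  · have hle : Finsupp.single s 1 ≤ n := by rw [Finsupp.single_le_iff]; omega
    rw [if_pos hle, one_mul, mvPderiv_apply, tsub_add_cancel_of_le hle]
    simp only [Finsupp.tsub_apply, Finsupp.single_eq_same]
    rw [show n s - 1 + 1 = n s by omega]

lemma star_lemma [CharZero k] (a b m r s A B : ℕ) (hm : 0 < m)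
    (w δ : MvPowerSeries (Fin 3) k)
    (hδ0 : MvPowerSeries.constantCoeff (σ := Fin 3) (R := k) δ ≠ 0)
    (hJ : MvPowerSeries.C (σ := Fin 3) (R := k) (m : k) * MvPowerSeries.monomial (R := k) (E3 A B 0) 1 *
        (MvPowerSeries.C (σ := Fin 3) (R := k) (b : k) * (MvPowerSeries.X 0 * mvPderiv 0 w) -
         MvPowerSeries.C (σ := Fin 3) (R := k) (a : k) * (MvPowerSeries.X 1 * mvPderiv 1 w)) =
      MvPowerSeries.X 0 ^ r * MvPowerSeries.X 1 ^ s * δ) :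
    A ≤ r ∧ B ≤ s ∧ ∀ n : Fin 3 →₀ ℕ,
      (m : k) * ((b : k) * n 0 - (a : k) * n 1) * MvPowerSeries.coeff (R := k) n w =
        if E3 (r-A) (s-B) 0 ≤ n then MvPowerSeries.coeff (R := k) (n - E3 (r-A) (s-B) 0) δ
        else 0 := by
  -- rewrite RHS as monomial * δ
  have hX : (MvPowerSeries.X 0 ^ r * MvPowerSeries.X 1 ^ s : MvPowerSeries (Fin 3) k) =
      MvPowerSeries.monomial (R := k) (E3 r s 0) 1 := by
    rw [← XXX_eq_monomial, pow_zero, mul_one]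
  rw [hX] at hJ
  -- coefficient form of the equation
  have key : ∀ n : Fin 3 →₀ ℕ,
      (if E3 A B 0 ≤ n then
        (m : k) * ((b : k) * (n - E3 A B 0) 0 - (a : k) * (n - E3 A B 0) 1) *
          MvPowerSeries.coeff (R := k) (n - E3 A B 0) w
      else 0) =
      (if E3 r s 0 ≤ n then MvPowerSeries.coeff (R := k) (n - E3 r s 0) δ else 0) := by
    intro n
    have h1 := congrArg (MvPowerSeries.coeff (R := k) n) hJ
    rw [mul_assoc, MvPowerSeries.coeff_C_mul, MvPowerSeries.coeff_monomial_mul,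
      MvPowerSeries.coeff_monomial_mul] at h1
    simp only [one_mul] at h1
    rw [← h1, mul_ite, mul_zero]
    by_cases h : E3 A B 0 ≤ n
    · rw [if_pos h, if_pos h, map_sub, MvPowerSeries.coeff_C_mul, MvPowerSeries.coeff_C_mul,
        coeff_X_mul_pderiv, coeff_X_mul_pderiv]
      ring
    · rw [if_neg h, if_neg h]
  -- A ≤ r and B ≤ s
  have hALE : A ≤ r ∧ B ≤ s := by
    have h1 := key (E3 r s 0)
    rw [if_pos le_rfl, tsub_self] at h1
    have h2 : MvPowerSeries.coeff (R := k) 0 δ ≠ 0 := hδ0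
    by_contra hcon
    have hnle : ¬ E3 A B 0 ≤ E3 r s 0 := by
      rw [E3_le_iff]
      simp only [E3_apply0, E3_apply1, E3_apply2]
      omega
    rw [if_neg hnle] at h1
    exact h2 h1.symm
  obtain ⟨hAr, hBs⟩ := hALE
  refine ⟨hAr, hBs, fun n => ?_⟩
  have h1 := key (n + E3 A B 0)
  have hle : E3 A B 0 ≤ n + E3 A B 0 := le_add_self
  rw [if_pos hle, add_tsub_cancel_right] at h1
  rw [h1]
  -- identify the two if-conditions and values
  have hcond : (E3 r s 0 ≤ n + E3 A B 0) ↔ (E3 (r-A) (s-B) 0 ≤ n) := by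
    rw [E3_le_iff, E3_le_iff]
    simp only [Finsupp.add_apply, E3_apply0, E3_apply1, E3_apply2]
    omega
  by_cases h : E3 (r-A) (s-B) 0 ≤ n
  · rw [if_pos (hcond.mpr h), if_pos h]
    have h0 := (E3_le_iff.mp h).1
    have h1' := (E3_le_iff.mp h).2.1
    have harg : n + E3 A B 0 - E3 r s 0 = n - E3 (r-A) (s-B) 0 := by
      ext i
      fin_cases i <;>
        simp [E3, Finsupp.tsub_apply, Finsupp.add_apply, Finsupp.single_apply] <;>
        omega
    rw [harg]
  · rw [if_neg (fun hc => h (hcond.mp hc)), if_neg h]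

def deg3 (n : Fin 3 →₀ ℕ) : ℕ := n 0 + n 1 + n 2

lemma deg3_add (p q : Fin 3 →₀ ℕ) : deg3 (p + q) = deg3 p + deg3 q := by
  simp [deg3, Finsupp.add_apply]; ring

lemma deg3_eq_zero {p : Fin 3 →₀ ℕ} (h : deg3 p = 0) : p = 0 := by
  ext i
  fin_cases i <;> simp_all [deg3]

lemma coeff_mul_support_right (A B : MvPowerSeries (Fin 3) k) (D : ℕ)
    (hB : ∀ q, deg3 q ≤ D → MvPowerSeries.coeff (R := k) q B = 0)
    (n : Fin 3 →₀ ℕ) (hn : deg3 n ≤ D) :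
    MvPowerSeries.coeff (R := k) n (A * B) = 0 := by
  rw [MvPowerSeries.coeff_mul]
  apply Finset.sum_eq_zero
  rintro ⟨p, q⟩ hpq
  rw [Finset.HasAntidiagonal.mem_antidiagonal] at hpq
  have : deg3 q ≤ D := by
    have := deg3_add p q
    rw [hpq] at this
    omega
  rw [hB q this, mul_zero]

lemma coeff_mul_support_order (A B : MvPowerSeries (Fin 3) k) (u v : ℕ)
    (hA : ∀ q, deg3 q < u → MvPowerSeries.coeff (R := k) q A = 0)
    (hB : ∀ q, deg3 q < v → MvPowerSeries.coeff (R := k) q B = 0)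
    (n : Fin 3 →₀ ℕ) (hn : deg3 n < u + v) :
    MvPowerSeries.coeff (R := k) n (A * B) = 0 := by
  rw [MvPowerSeries.coeff_mul]
  apply Finset.sum_eq_zero
  rintro ⟨p, q⟩ hpq
  rw [Finset.HasAntidiagonal.mem_antidiagonal] at hpq
  have hd : deg3 p + deg3 q = deg3 n := by rw [← deg3_add, hpq]
  by_cases hp : deg3 p < u
  · rw [hA p hp, zero_mul]
  · rw [hB q (by omega), mul_zero]

lemma pow_support_order (B : MvPowerSeries (Fin 3) k) (v : ℕ)
    (hB : ∀ q, deg3 q < v → MvPowerSeries.coeff (R := k) q B = 0) :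
    ∀ (j : ℕ) (n : Fin 3 →₀ ℕ), deg3 n < j * v → MvPowerSeries.coeff (R := k) n (B ^ j) = 0 := by
  intro j
  induction j with
  | zero => intro n hn; omega
  | succ j ih =>
    intro n hn
    rw [pow_succ, add_one_mul] at *
    exact coeff_mul_support_order _ _ (j*v) v ih hB n hn

lemma coeff_mul_top (A B : MvPowerSeries (Fin 3) k) (n : Fin 3 →₀ ℕ)
    (hB : ∀ q, deg3 q < deg3 n → MvPowerSeries.coeff (R := k) q B = 0) :
    MvPowerSeries.coeff (R := k) n (A * B) =
      MvPowerSeries.constantCoeff (σ := Fin 3) (R := k) A * MvPowerSeries.coeff (R := k) n B := by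
  rw [MvPowerSeries.coeff_mul]
  rw [Finset.sum_eq_single ((0 : Fin 3 →₀ ℕ), n)]
  · rw [MvPowerSeries.coeff_zero_eq_constantCoeff]
  · rintro ⟨p, q⟩ hpq hne
    rw [Finset.HasAntidiagonal.mem_antidiagonal] at hpq
    have hd : deg3 p + deg3 q = deg3 n := by rw [← deg3_add, hpq]
    by_cases hp : p = 0
    · subst hp
      rw [zero_add] at hpq
      have hq : q = n := hpq
      subst hq
      exact absurd rfl hne
    · have : deg3 p ≠ 0 := fun hc => hp (deg3_eq_zero hc)
      rw [hB q (by omega), mul_zero]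
  · intro hnotmem
    exfalso
    apply hnotmem
    rw [Finset.HasAntidiagonal.mem_antidiagonal, zero_add]

lemma coeff_mul_agree (A A' B B' : MvPowerSeries (Fin 3) k) (D : ℕ)
    (hA : ∀ q, deg3 q ≤ D → MvPowerSeries.coeff (R := k) q A = MvPowerSeries.coeff (R := k) q A')
    (hB : ∀ q, deg3 q ≤ D → MvPowerSeries.coeff (R := k) q B = MvPowerSeries.coeff (R := k) q B') :
    ∀ n, deg3 n ≤ D →
      MvPowerSeries.coeff (R := k) n (A * B) = MvPowerSeries.coeff (R := k) n (A' * B') := by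
  intro n hn
  rw [MvPowerSeries.coeff_mul, MvPowerSeries.coeff_mul]
  apply Finset.sum_congr rfl
  rintro ⟨p, q⟩ hpq
  rw [Finset.HasAntidiagonal.mem_antidiagonal] at hpq
  have hd : deg3 p + deg3 q = deg3 n := by rw [← deg3_add, hpq]
  rw [hA p (by omega), hB q (by omega)]

lemma coeff_pow_agree (A B : MvPowerSeries (Fin 3) k) (D : ℕ)
    (h : ∀ q, deg3 q ≤ D → MvPowerSeries.coeff (R := k) q A = MvPowerSeries.coeff (R := k) q B) :
    ∀ (j : ℕ) (n : Fin 3 →₀ ℕ), deg3 n ≤ D →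
      MvPowerSeries.coeff (R := k) n (A ^ j) = MvPowerSeries.coeff (R := k) n (B ^ j) := by
  intro j
  induction j with
  | zero => intro n hn; rfl
  | succ j ih =>
    intro n hn
    rw [pow_succ, pow_succ]
    exact coeff_mul_agree _ _ _ _ D ih h n hn

noncomputable def rootSeq (N : ℕ) (h : MvPowerSeries (Fin 3) k) :
    ℕ → MvPowerSeries (Fin 3) k
  | 0 => 1
  | d+1 => rootSeq N h d + (show MvPowerSeries (Fin 3) k from fun n => if deg3 n = d + 1 then
      (MvPowerSeries.coeff (R := k) n (1 + h) -
        MvPowerSeries.coeff (R := k) n ((rootSeq N h d) ^ N)) * (N : k)⁻¹ else 0)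

lemma coeff_rootSeq_succ (N : ℕ) (h : MvPowerSeries (Fin 3) k) (d : ℕ) (n : Fin 3 →₀ ℕ) :
    MvPowerSeries.coeff (R := k) n (rootSeq N h (d+1)) =
      MvPowerSeries.coeff (R := k) n (rootSeq N h d) +
        (if deg3 n = d + 1 then
          (MvPowerSeries.coeff (R := k) n (1 + h) -
            MvPowerSeries.coeff (R := k) n ((rootSeq N h d) ^ N)) * (N : k)⁻¹ else 0) := by
  rw [rootSeq, map_add]
  rfl

lemma rootSeq_agree (N : ℕ) (h : MvPowerSeries (Fin 3) k) (d d' : ℕ) (hdd : d ≤ d')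
    (n : Fin 3 →₀ ℕ) (hn : deg3 n ≤ d) :
    MvPowerSeries.coeff (R := k) n (rootSeq N h d') = MvPowerSeries.coeff (R := k) n (rootSeq N h d) := by
  induction d', hdd using Nat.le_induction with
  | base => rfl
  | succ d' hdd ih =>
    rw [coeff_rootSeq_succ, if_neg (by omega), add_zero, ih]

lemma rootSeq_invariant [CharZero k] (N : ℕ) (hN : 0 < N) (h : MvPowerSeries (Fin 3) k)
    (h0 : MvPowerSeries.constantCoeff (σ := Fin 3) (R := k) h = 0) :
    ∀ d : ℕ, (MvPowerSeries.constantCoeff (σ := Fin 3) (R := k) (rootSeq N h d) = 1) ∧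
      (∀ n, deg3 n ≤ d →
        MvPowerSeries.coeff (R := k) n ((rootSeq N h d) ^ N) =
          MvPowerSeries.coeff (R := k) n (1 + h)) := by
  intro d
  induction d with
  | zero =>
    constructor
    · rw [rootSeq]; exact map_one _
    · intro n hn
      have hn0 : n = 0 := deg3_eq_zero (by omega)
      rw [rootSeq, one_pow, hn0, MvPowerSeries.coeff_zero_eq_constantCoeff_apply,
        MvPowerSeries.coeff_zero_eq_constantCoeff_apply, map_add, map_one, h0, add_zero]
  | succ d ih =>
    obtain ⟨ih0, ih1⟩ := ih
    set F := rootSeq N h d with hF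
    -- the correction term
    set g : MvPowerSeries (Fin 3) k := (fun n => if deg3 n = d + 1 then
      (MvPowerSeries.coeff (R := k) n (1 + h) -
        MvPowerSeries.coeff (R := k) n (F ^ N)) * (N : k)⁻¹ else 0) with hg
    have hcoeffg : ∀ n, MvPowerSeries.coeff (R := k) n g = (if deg3 n = d + 1 then
      (MvPowerSeries.coeff (R := k) n (1 + h) -
        MvPowerSeries.coeff (R := k) n (F ^ N)) * (N : k)⁻¹ else 0) := fun n => rfl
    have hgsupp : ∀ q, deg3 q < d + 1 → MvPowerSeries.coeff (R := k) q g = 0 := by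
      intro q hq
      rw [hcoeffg, if_neg (by omega)]
    have hseq : rootSeq N h (d+1) = F + g := by rw [rootSeq]
    have hconst : MvPowerSeries.constantCoeff (σ := Fin 3) (R := k) (rootSeq N h (d+1)) = 1 := by
      rw [hseq, map_add, ih0]
      have : MvPowerSeries.constantCoeff (σ := Fin 3) (R := k) g = 0 := by
        rw [← MvPowerSeries.coeff_zero_eq_constantCoeff_apply, hgsupp 0 (by simp [deg3])]
      rw [this, add_zero]
    refine ⟨hconst, ?_⟩
    intro n hn
    rw [hseq, show F + g = g + F from add_comm _ _, add_pow]
    rw [map_sum]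
    -- helper to compute terms
    have hterm : ∀ j, MvPowerSeries.coeff (R := k) n (g ^ j * F ^ (N - j) * (N.choose j : MvPowerSeries (Fin 3) k)) =
        (N.choose j : k) * MvPowerSeries.coeff (R := k) n (g ^ j * F ^ (N - j)) := by
      intro j
      rw [← map_natCast (MvPowerSeries.C (σ := Fin 3) (R := k)) (N.choose j), mul_comm,
        MvPowerSeries.coeff_C_mul]
    obtain ⟨N', hN'⟩ : ∃ N', N = N' + 1 := ⟨N - 1, by omega⟩
    rw [hN', Finset.sum_range_succ', Finset.sum_range_succ']
    have hNk : (N : k) ≠ 0 := Nat.cast_ne_zero.mpr (by omega)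
    have hzero : ∀ i ∈ Finset.range N', MvPowerSeries.coeff (R := k) n
        (g ^ (i + 1 + 1) * F ^ (N' + 1 - (i + 1 + 1)) *
          ((N'+1).choose (i+1+1) : MvPowerSeries (Fin 3) k)) = 0 := by
      intro i _
      rw [← hN', hterm]
      have hg2 : MvPowerSeries.coeff (R := k) n (g ^ (i + 1 + 1) * F ^ (N - (i + 1 + 1))) = 0 := by
        rw [mul_comm]
        apply coeff_mul_support_right _ _ (d+1) _ n hn
        intro q hq
        apply pow_support_order g (d+1) hgsupp (i+1+1) q
        have : (i+1+1) * (d+1) = i*(d+1) + (d+1) + (d+1) := by ring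
        omega
      rw [hg2, mul_zero]
    rw [Finset.sum_eq_zero hzero, zero_add, ← hN', hterm, hterm]
    simp only [zero_add, pow_one, Nat.choose_one_right]
    have hsub1 : N - 1 = N' := by omega
    rw [hsub1]
    by_cases hdn : deg3 n = d + 1
    · have hmul : MvPowerSeries.coeff (R := k) n (g * F ^ N') =
          MvPowerSeries.coeff (R := k) n g := by
        rw [mul_comm, coeff_mul_top _ _ n (fun q hq => hgsupp q (by omega)),
          map_pow, ih0, one_pow, one_mul]
      rw [hmul, hcoeffg, if_pos hdn]
      field_simp
      simp only [Nat.choose_zero_right, Nat.cast_one, one_mul, pow_zero, Nat.sub_zero]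
      ring
    · have hmul : MvPowerSeries.coeff (R := k) n (g * F ^ N') = 0 := by
        rw [mul_comm]
        exact coeff_mul_support_right _ _ d (fun q hq => hgsupp q (by omega)) n (by omega)
      rw [hmul, mul_zero, zero_add]
      simp only [Nat.choose_zero_right, Nat.cast_one, one_mul, pow_zero, Nat.sub_zero]
      exact ih1 n (by omega)

lemma exists_root_one_add [CharZero k] (N : ℕ) (hN : 0 < N) (h : MvPowerSeries (Fin 3) k)
    (h0 : MvPowerSeries.constantCoeff (σ := Fin 3) (R := k) h = 0) :
    ∃ S : MvPowerSeries (Fin 3) k, S ^ N = 1 + h ∧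
      MvPowerSeries.constantCoeff (σ := Fin 3) (R := k) S = 1 := by
  refine ⟨(fun n => MvPowerSeries.coeff (R := k) n (rootSeq N h (deg3 n))), ?_, ?_⟩
  · ext n
    have hagree : ∀ q, deg3 q ≤ deg3 n →
        MvPowerSeries.coeff (R := k) q
          ((fun n => MvPowerSeries.coeff (R := k) n (rootSeq N h (deg3 n))) :
            MvPowerSeries (Fin 3) k) =
        MvPowerSeries.coeff (R := k) q (rootSeq N h (deg3 n)) := by
      intro q hq
      have h1 : MvPowerSeries.coeff (R := k) q
          ((fun n => MvPowerSeries.coeff (R := k) n (rootSeq N h (deg3 n))) :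
            MvPowerSeries (Fin 3) k) = MvPowerSeries.coeff (R := k) q (rootSeq N h (deg3 q)) := rfl
      rw [h1, rootSeq_agree N h (deg3 q) (deg3 n) hq q le_rfl]
    rw [coeff_pow_agree _ _ (deg3 n) hagree N n le_rfl]
    exact (rootSeq_invariant N hN h h0 (deg3 n)).2 n le_rfl
  · have h1 : MvPowerSeries.constantCoeff (σ := Fin 3) (R := k)
        ((fun n => MvPowerSeries.coeff (R := k) n (rootSeq N h (deg3 n))) :
          MvPowerSeries (Fin 3) k) =
        MvPowerSeries.coeff (R := k) 0 (rootSeq N h (deg3 0)) := rfl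
    rw [h1]
    have : deg3 (0 : Fin 3 →₀ ℕ) = 0 := by simp [deg3]
    rw [this, MvPowerSeries.coeff_zero_eq_constantCoeff_apply]
    exact (rootSeq_invariant N hN h h0 0).1

lemma exists_root [CharZero k] [IsAlgClosed k] (N : ℕ) (hN : 0 < N)
    (γ : MvPowerSeries (Fin 3) k)
    (hγ : MvPowerSeries.constantCoeff (σ := Fin 3) (R := k) γ ≠ 0) :
    ∃ θ : MvPowerSeries (Fin 3) k, θ ^ N = γ ∧
      MvPowerSeries.constantCoeff (σ := Fin 3) (R := k) θ ≠ 0 := by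
  set γ₀ := MvPowerSeries.constantCoeff (σ := Fin 3) (R := k) γ with hγ₀
  obtain ⟨c₀, hc₀⟩ := IsAlgClosed.exists_pow_nat_eq γ₀ hN
  have hc₀ne : c₀ ≠ 0 := by
    intro hc
    apply hγ
    rw [← hc₀, hc, zero_pow (by omega)]
  set h := MvPowerSeries.C (σ := Fin 3) (R := k) γ₀⁻¹ * γ - 1 with hh
  have h0 : MvPowerSeries.constantCoeff (σ := Fin 3) (R := k) h = 0 := by
    rw [hh, map_sub, map_mul, map_one, MvPowerSeries.constantCoeff_C]
    field_simp
    rw [mul_zero, hγ₀, sub_self]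
  obtain ⟨S, hS, hS0⟩ := exists_root_one_add N hN h h0
  refine ⟨MvPowerSeries.C (σ := Fin 3) (R := k) c₀ * S, ?_, ?_⟩
  · rw [mul_pow, ← map_pow, hc₀, hS, hh]
    rw [add_sub_cancel]
    rw [← mul_assoc, ← map_mul]
    rw [mul_inv_cancel₀ hγ, map_one, one_mul]
  · rw [map_mul, MvPowerSeries.constantCoeff_C, hS0, mul_one]
    exact hc₀ne

end Helpers
section Helpers2
variable {k : Type*} [Field k]

lemma exists_unit_zpow [CharZero k] [IsAlgClosed k] (M : ℤ) (hM : M ≠ 0)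
    (Γ : (MvPowerSeries (Fin 3) k)ˣ) :
    ∃ Θ : (MvPowerSeries (Fin 3) k)ˣ, Θ ^ M = Γ := by
  rcases lt_or_gt_of_ne hM with hneg | hpos
  · have hγ0 : MvPowerSeries.constantCoeff (σ := Fin 3) (R := k) (↑Γ⁻¹ : MvPowerSeries (Fin 3) k) ≠ 0 :=
      ((Γ⁻¹).isUnit.map (MvPowerSeries.constantCoeff (σ := Fin 3) (R := k))).ne_zero
    obtain ⟨θ, hθ, hθ0⟩ := exists_root (-M).toNat (by omega) (↑Γ⁻¹ : MvPowerSeries (Fin 3) k) hγ0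
    obtain ⟨Θ, hΘ⟩ := MvPowerSeries.isUnit_iff_constantCoeff.mpr (isUnit_iff_ne_zero.mpr hθ0)
    refine ⟨Θ, ?_⟩
    have hpow : Θ ^ ((-M).toNat) = Γ⁻¹ := by
      apply Units.ext
      rw [Units.val_pow_eq_pow_val, hΘ, hθ]
    have hM' : M = -(((-M).toNat : ℤ)) := by omega
    rw [hM', zpow_neg, zpow_natCast, hpow, inv_inv]
  · have hγ0 : MvPowerSeries.constantCoeff (σ := Fin 3) (R := k) (↑Γ : MvPowerSeries (Fin 3) k) ≠ 0 :=
      (Γ.isUnit.map (MvPowerSeries.constantCoeff (σ := Fin 3) (R := k))).ne_zero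
    obtain ⟨θ, hθ, hθ0⟩ := exists_root M.toNat (by omega) (↑Γ : MvPowerSeries (Fin 3) k) hγ0
    obtain ⟨Θ, hΘ⟩ := MvPowerSeries.isUnit_iff_constantCoeff.mpr (isUnit_iff_ne_zero.mpr hθ0)
    refine ⟨Θ, ?_⟩
    have hpow : Θ ^ (M.toNat) = Γ := by
      apply Units.ext
      rw [Units.val_pow_eq_pow_val, hΘ, hθ]
    have hM' : M = ((M.toNat : ℤ)) := by omega
    rw [hM', zpow_natCast, hpow]

lemma coeff_single_X_mul (i j : Fin 3) (T : MvPowerSeries (Fin 3) k) :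
    MvPowerSeries.coeff (R := k) (Finsupp.single j 1) (MvPowerSeries.X i * T) =
      if i = j then MvPowerSeries.constantCoeff (σ := Fin 3) (R := k) T else 0 := by
  rw [MvPowerSeries.X, MvPowerSeries.coeff_monomial_mul]
  by_cases hij : i = j
  · subst hij
    rw [if_pos le_rfl, if_pos rfl, tsub_self, one_mul,
      MvPowerSeries.coeff_zero_eq_constantCoeff_apply]
  · rw [if_neg, if_neg hij]
    rw [Finsupp.single_le_iff, Finsupp.single_apply, if_neg (fun h => hij h.symm)]
    omega

lemma eq_E3 (n : Fin 3 →₀ ℕ) : n = E3 (n 0) (n 1) (n 2) := by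
  ext i
  fin_cases i <;> simp

end Helpers2

/-- Case 3 of Lemma 3.2: if `u = (x^a y^b)^m`, `v = (x^a y^b)^t(α+z)` with `gcd(a,b) = 1`,
`α ≠ 0`, and the Jacobian determinant of `(u,v,w)` is a monomial `x^r y^s` times a unit,
then after a change of regular parameters `x̄, ȳ, z̄` with `u = (x̄^a ȳ^b)^m` and
`v = (x̄^a ȳ^b)^t(α+z̄)`, one has `w = g(x̄^a ȳ^b, z̄) + x̄^c ȳ^d` with `ad − bc ≠ 0`. -/
theorem normal_form_case3
    (k : Type*) [Field k] [IsAlgClosed k] [CharZero k]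
    (a b m t : ℕ) (ha : 0 < a) (hb : 0 < b) (hm : 0 < m) (ht : 0 < t)
    (hab : Nat.gcd a b = 1) (α : k) (hα : α ≠ 0)
    (u v w : MvPowerSeries (Fin 3) k)
    (hu : u = ((MvPowerSeries.X 0) ^ a * (MvPowerSeries.X 1) ^ b) ^ m)
    (hv : v = ((MvPowerSeries.X 0) ^ a * (MvPowerSeries.X 1) ^ b) ^ t *
      (MvPowerSeries.C (σ := Fin 3) (R := k) α + MvPowerSeries.X 2))
    (r s : ℕ) (δ : MvPowerSeries (Fin 3) k) (hδ : IsUnit δ)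
    (hJ : mvJacobian u v w = (MvPowerSeries.X 0) ^ r * (MvPowerSeries.X 1) ^ s * δ) :
    ∃ (xbar ybar zbar : MvPowerSeries (Fin 3) k) (c d : ℕ) (g : MvPowerSeries (Fin 2) k),
      IsRegularSystem xbar ybar zbar ∧
      u = (xbar ^ a * ybar ^ b) ^ m ∧
      v = (xbar ^ a * ybar ^ b) ^ t * (MvPowerSeries.C (σ := Fin 3) (R := k) α + zbar) ∧
      (a : ℤ) * d - (b : ℤ) * c ≠ 0 ∧
      w = subst2 g (xbar ^ a * ybar ^ b) zbar + xbar ^ c * ybar ^ d := by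

  classical
  -- set up exponents for the Jacobian formula
  obtain ⟨A, hA⟩ : ∃ A, a*m + a*t = A + 1 :=
    ⟨a*m + a*t - 1, by have h1 := Nat.mul_pos ha hm; omega⟩
  obtain ⟨B, hB⟩ : ∃ B, b*m + b*t = B + 1 :=
    ⟨b*m + b*t - 1, by have h1 := Nat.mul_pos hb hm; omega⟩
  rw [hu, hv, jacobian_formula a b m t A B ha hb hm ht hA hB α w] at hJ
  have hδ0 : MvPowerSeries.constantCoeff (σ := Fin 3) (R := k) δ ≠ 0 :=
    (MvPowerSeries.isUnit_iff_constantCoeff.mp hδ).ne_zero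
  obtain ⟨hAr, hBs, key⟩ := star_lemma a b m r s A B hm w δ hδ0 hJ
  set cc := r - A with hcc
  set dd := s - B with hdd
  set Q' : Fin 3 →₀ ℕ := E3 cc dd 0 with hQ'
  -- facts at Q'
  have hkeyQ := key Q'
  rw [if_pos le_rfl, tsub_self, MvPowerSeries.coeff_zero_eq_constantCoeff_apply] at hkeyQ
  simp only [hQ', E3_apply0, E3_apply1] at hkeyQ
  have hprod : (m:k) * ((b:k)*cc - (a:k)*dd) * MvPowerSeries.coeff (R := k) Q' w ≠ 0 := by
    rw [hkeyQ]; exact hδ0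
  have hLQ : ((b:k)*cc - (a:k)*dd) ≠ 0 := by
    intro hz; apply hprod; rw [hz]; ring
  have hwQ : MvPowerSeries.coeff (R := k) Q' w ≠ 0 := by
    intro hz; apply hprod; rw [hz]; ring
  have hne_nat : ¬ (b * cc = a * dd) := by
    intro hcon
    apply hLQ
    have h2 := congrArg (Nat.cast : ℕ → k) hcon
    push_cast at h2
    rw [sub_eq_zero]
    exact h2
  have hint : (a : ℤ) * dd - (b : ℤ) * cc ≠ 0 := by
    intro hcon
    apply hne_nat
    rw [sub_eq_zero, ← Nat.cast_mul, ← Nat.cast_mul, Nat.cast_inj] at hcon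
    omega
  -- diagonal and off-diagonal parts of w
  set w0 : MvPowerSeries (Fin 3) k :=
    (fun n => if b * n 0 = a * n 1 then MvPowerSeries.coeff (R := k) n w else 0) with hw0
  set w1 : MvPowerSeries (Fin 3) k :=
    (fun n => if b * n 0 = a * n 1 then 0 else MvPowerSeries.coeff (R := k) n w) with hw1
  have hcoeffw0 : ∀ n, MvPowerSeries.coeff (R := k) n w0 =
      (if b * n 0 = a * n 1 then MvPowerSeries.coeff (R := k) n w else 0) := fun n => rfl
  have hcoeffw1 : ∀ n, MvPowerSeries.coeff (R := k) n w1 =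
      (if b * n 0 = a * n 1 then 0 else MvPowerSeries.coeff (R := k) n w) := fun n => rfl
  have hsplit : w = w0 + w1 := by
    ext n
    rw [map_add, hcoeffw0, hcoeffw1]
    split_ifs <;> ring
  -- nondiagonal coefficients vanish when the eigenvalue is nonzero
  have hLne : ∀ n : Fin 3 →₀ ℕ, ¬ (b * n 0 = a * n 1) →
      ((b:k) * n 0 - (a:k) * n 1) ≠ 0 := by
    intro n hn hz
    apply hn
    rw [sub_eq_zero] at hz
    have : ((b * n 0 : ℕ) : k) = ((a * n 1 : ℕ) : k) := by push_cast; exact hz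
    exact_mod_cast this
  have hw1supp : ∀ n, ¬ Q' ≤ n → MvPowerSeries.coeff (R := k) n w1 = 0 := by
    intro n hn
    rw [hcoeffw1]
    by_cases hdiag : b * n 0 = a * n 1
    · rw [if_pos hdiag]
    · rw [if_neg hdiag]
      have hk := key n
      rw [if_neg hn] at hk
      have hmne : (m : k) ≠ 0 := Nat.cast_ne_zero.mpr (by omega)
      have := mul_eq_zero.mp hk
      rcases this with h1 | h1
      · rcases mul_eq_zero.mp h1 with h2 | h2
        · exact absurd h2 hmne
        · exact absurd h2 (hLne n hdiag)
      · exact h1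
  -- the unit γ
  set γ : MvPowerSeries (Fin 3) k :=
    (fun n => MvPowerSeries.coeff (R := k) (n + Q') w1) with hγ
  have hcoeffγ : ∀ n, MvPowerSeries.coeff (R := k) n γ =
      MvPowerSeries.coeff (R := k) (n + Q') w1 := fun n => rfl
  have hw1γ : w1 = MvPowerSeries.monomial (R := k) Q' 1 * γ := by
    ext n
    rw [MvPowerSeries.coeff_monomial_mul]
    by_cases hle : Q' ≤ n
    · rw [if_pos hle, one_mul, hcoeffγ, tsub_add_cancel_of_le hle]
    · rw [if_neg hle, hw1supp n hle]
  have hγ0 : MvPowerSeries.constantCoeff (σ := Fin 3) (R := k) γ ≠ 0 := by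
    rw [← MvPowerSeries.coeff_zero_eq_constantCoeff_apply, hcoeffγ, zero_add, hcoeffw1]
    have hQ'0 : Q' 0 = cc := by rw [hQ']; simp
    have hQ'1 : Q' 1 = dd := by rw [hQ']; simp
    rw [hQ'0, hQ'1, if_neg hne_nat]
    exact hwQ
  -- the unit Θ with Θ^M = γ
  obtain ⟨Γ, hΓ⟩ := MvPowerSeries.isUnit_iff_constantCoeff.mpr (isUnit_iff_ne_zero.mpr hγ0)
  set M : ℤ := (b:ℤ)*cc - (a:ℤ)*dd with hMdef
  have hMne : M ≠ 0 := by
    intro hz; apply hint; rw [hMdef] at hz; omega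
  obtain ⟨Θ, hΘ⟩ := exists_unit_zpow M hMne Γ
  set T1 : MvPowerSeries (Fin 3) k := ((Θ ^ (b:ℤ) : (MvPowerSeries (Fin 3) k)ˣ) :
    MvPowerSeries (Fin 3) k) with hT1
  set T2 : MvPowerSeries (Fin 3) k := ((Θ ^ (-(a:ℤ)) : (MvPowerSeries (Fin 3) k)ˣ) :
    MvPowerSeries (Fin 3) k) with hT2
  -- the key unit identities
  have hunit1 : T1 ^ a * T2 ^ b = 1 := by
    rw [hT1, hT2, ← Units.val_pow_eq_pow_val, ← Units.val_pow_eq_pow_val, ← Units.val_mul,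
      ← zpow_natCast (Θ ^ (b:ℤ)) a, ← zpow_natCast (Θ ^ (-(a:ℤ))) b, ← zpow_mul, ← zpow_mul,
      ← zpow_add, show (b:ℤ) * (a:ℕ) + (-(a:ℤ)) * (b:ℕ) = 0 by push_cast; ring, zpow_zero,
      Units.val_one]
  have hunit2 : T1 ^ cc * T2 ^ dd = γ := by
    rw [hT1, hT2, ← Units.val_pow_eq_pow_val, ← Units.val_pow_eq_pow_val, ← Units.val_mul,
      ← zpow_natCast (Θ ^ (b:ℤ)) cc, ← zpow_natCast (Θ ^ (-(a:ℤ))) dd, ← zpow_mul, ← zpow_mul,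
      ← zpow_add, show (b:ℤ) * (cc:ℕ) + (-(a:ℤ)) * (dd:ℕ) = M by rw [hMdef]; push_cast; ring,
      hΘ, hΓ]
  -- basic coordinate identities
  have hxy : (MvPowerSeries.X 0 * T1) ^ a * (MvPowerSeries.X 1 * T2) ^ b =
      (MvPowerSeries.X 0 : MvPowerSeries (Fin 3) k) ^ a * MvPowerSeries.X 1 ^ b := by
    rw [mul_pow, mul_pow]
    calc MvPowerSeries.X 0 ^ a * T1 ^ a * (MvPowerSeries.X 1 ^ b * T2 ^ b)
        = MvPowerSeries.X 0 ^ a * MvPowerSeries.X 1 ^ b * (T1 ^ a * T2 ^ b) := by ring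
      _ = _ := by rw [hunit1, mul_one]
  have hxcyd : (MvPowerSeries.X 0 * T1) ^ cc * (MvPowerSeries.X 1 * T2) ^ dd =
      MvPowerSeries.monomial (R := k) Q' 1 * γ := by
    rw [mul_pow, mul_pow]
    have hQm : (MvPowerSeries.X 0 : MvPowerSeries (Fin 3) k) ^ cc * MvPowerSeries.X 1 ^ dd =
        MvPowerSeries.monomial (R := k) Q' 1 := by
      have h1 := XXX_eq_monomial (k := k) cc dd 0
      rw [pow_zero, mul_one] at h1
      rw [h1, hQ']
    calc MvPowerSeries.X 0 ^ cc * T1 ^ cc * (MvPowerSeries.X 1 ^ dd * T2 ^ dd)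
        = (MvPowerSeries.X 0 ^ cc * MvPowerSeries.X 1 ^ dd) * (T1 ^ cc * T2 ^ dd) := by ring
      _ = MvPowerSeries.monomial (R := k) Q' 1 * γ := by rw [hunit2, hQm]
  -- constant coefficients of the units
  have hτ1 : MvPowerSeries.constantCoeff (σ := Fin 3) (R := k) T1 ≠ 0 :=
    ((Θ ^ (b:ℤ)).isUnit.map (MvPowerSeries.constantCoeff (σ := Fin 3) (R := k))).ne_zero
  have hτ2 : MvPowerSeries.constantCoeff (σ := Fin 3) (R := k) T2 ≠ 0 :=
    ((Θ ^ (-(a:ℤ))).isUnit.map (MvPowerSeries.constantCoeff (σ := Fin 3) (R := k))).ne_zero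
  -- the two-variable series g
  set gg : MvPowerSeries (Fin 2) k :=
    (fun q => MvPowerSeries.coeff (R := k) (E3 (a * q 0) (b * q 0) (q 1)) w) with hgg
  have hgc : ∀ p : ℕ × ℕ,
      MvPowerSeries.coeff (R := k) (Finsupp.single 0 p.1 + Finsupp.single 1 p.2) gg =
        MvPowerSeries.coeff (R := k) (E3 (a * p.1) (b * p.1) p.2) w := by
    intro p
    rw [MvPowerSeries.coeff_apply, hgg]
    simp [Finsupp.add_apply, Finsupp.single_apply]
  have hAB : ∀ p1 p2 : ℕ,
      (((MvPowerSeries.X 0 : MvPowerSeries (Fin 3) k) ^ a * MvPowerSeries.X 1 ^ b) ^ p1 *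
        MvPowerSeries.X 2 ^ p2) = MvPowerSeries.monomial (R := k) (E3 (a*p1) (b*p1) p2) 1 := by
    intro p1 p2
    rw [← XXX_eq_monomial, mul_pow, ← pow_mul, ← pow_mul]
  -- the substitution computes the diagonal part
  have hsubst : subst2 gg
      ((MvPowerSeries.X 0 : MvPowerSeries (Fin 3) k) ^ a * MvPowerSeries.X 1 ^ b)
      (MvPowerSeries.X 2) = w0 := by
    ext n
    have hc : MvPowerSeries.coeff (R := k) n (subst2 gg
        ((MvPowerSeries.X 0 : MvPowerSeries (Fin 3) k) ^ a * MvPowerSeries.X 1 ^ b)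
        (MvPowerSeries.X 2)) = ∑ᶠ p : ℕ × ℕ,
          MvPowerSeries.coeff (R := k) (Finsupp.single 0 p.1 + Finsupp.single 1 p.2) gg *
            MvPowerSeries.coeff (R := k) n
              (((MvPowerSeries.X 0 : MvPowerSeries (Fin 3) k) ^ a *
                MvPowerSeries.X 1 ^ b) ^ p.1 * MvPowerSeries.X 2 ^ p.2) := rfl
    rw [hc, hcoeffw0]
    by_cases hdiag : b * n 0 = a * n 1
    · -- on the diagonal
      have hdvd : a ∣ n 0 := by
        apply Nat.Coprime.dvd_of_dvd_mul_right hab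
        exact ⟨n 1, by rw [mul_comm]; exact hdiag⟩
      obtain ⟨e, he⟩ := hdvd
      have hn1 : n 1 = b * e := by
        have h2 : a * (b * e) = a * n 1 := by
          rw [← hdiag, he]; ring
        exact (Nat.eq_of_mul_eq_mul_left ha h2).symm
      have hnE : n = E3 (a*e) (b*e) (n 2) := by
        have h3 := eq_E3 n
        rw [he, hn1] at h3
        exact h3
      rw [finsum_eq_single _ (e, n 2) ?_]
      · rw [hgc, hAB, MvPowerSeries.coeff_monomial, if_pos hnE, mul_one, if_pos hdiag]
        exact (congrArg (fun q => MvPowerSeries.coeff (R := k) q w) hnE).symm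
      · rintro ⟨p1, p2⟩ hne
        rw [hAB, MvPowerSeries.coeff_monomial]
        by_cases hEq : n = E3 (a*p1) (b*p1) p2
        · exfalso
          apply hne
          have h0 : n 0 = a * p1 := by rw [hEq]; simp
          have h2 : n 2 = p2 := by rw [hEq]; simp
          have hp1 : p1 = e := by
            apply Nat.eq_of_mul_eq_mul_left ha
            rw [← h0, he]
          rw [Prod.mk.injEq]
          exact ⟨hp1, h2.symm⟩
        · rw [if_neg hEq, mul_zero]
    · -- off the diagonal
      rw [if_neg hdiag]
      have hzero : ∀ p : ℕ × ℕ,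
          MvPowerSeries.coeff (R := k) (Finsupp.single 0 p.1 + Finsupp.single 1 p.2) gg *
            MvPowerSeries.coeff (R := k) n
              (((MvPowerSeries.X 0 : MvPowerSeries (Fin 3) k) ^ a *
                MvPowerSeries.X 1 ^ b) ^ p.1 * MvPowerSeries.X 2 ^ p.2) = 0 := by
        rintro ⟨p1, p2⟩
        rw [hAB, MvPowerSeries.coeff_monomial]
        by_cases hEq : n = E3 (a*p1) (b*p1) p2
        · exfalso
          apply hdiag
          have h0 : n 0 = a * p1 := by rw [hEq]; simp
          have h1 : n 1 = b * p1 := by rw [hEq]; simp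
          rw [h0, h1]; ring
        · rw [if_neg hEq, mul_zero]
      calc ∑ᶠ p : ℕ × ℕ, MvPowerSeries.coeff (R := k)
            (Finsupp.single 0 p.1 + Finsupp.single 1 p.2) gg *
            MvPowerSeries.coeff (R := k) n
              (((MvPowerSeries.X 0 : MvPowerSeries (Fin 3) k) ^ a *
                MvPowerSeries.X 1 ^ b) ^ p.1 * MvPowerSeries.X 2 ^ p.2)
          = ∑ᶠ _ : ℕ × ℕ, (0:k) := by
            apply finsum_congr
            intro p
            exact hzero p
        _ = 0 := finsum_zero
  -- the new coordinates
  refine ⟨MvPowerSeries.X 0 * T1, MvPowerSeries.X 1 * T2, MvPowerSeries.X 2, cc, dd, gg,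
    ?_, ?_, ?_, ?_, ?_⟩
  · -- regular system
    refine ⟨?_, ?_, ?_, ?_⟩
    · rw [map_mul, MvPowerSeries.constantCoeff_X, zero_mul]
    · rw [map_mul, MvPowerSeries.constantCoeff_X, zero_mul]
    · exact MvPowerSeries.constantCoeff_X 2
    · rw [Matrix.det_fin_three]
      simp only [Matrix.of_apply, Matrix.cons_val', Matrix.cons_val_zero, Matrix.cons_val_one,
        Matrix.head_cons, Matrix.empty_val', Matrix.cons_val_fin_one, Matrix.cons_val_two,
        Matrix.tail_cons, Matrix.head_fin_const]
      rw [coeff_single_X_mul, coeff_single_X_mul, coeff_single_X_mul, coeff_single_X_mul,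
        coeff_single_X_mul, coeff_single_X_mul]
      simp only [MvPowerSeries.coeff_X, Finsupp.single_eq_single_iff]
      norm_num
      rw [if_neg (by decide : ¬(1:Fin 3) = 2), if_neg (by decide : ¬(0:Fin 3) = 2),
        sub_zero, sub_zero]
      exact mul_ne_zero hτ1 hτ2
  · rw [hxy]; exact hu
  · rw [hxy]; exact hv
  · exact hint
  · rw [hxy, hsubst, hxcyd, ← hw1γ]
    exact hsplit
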